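/- arXiv:2012.09952 — 5 statements merged into one kernel-verified Lean document; each statement's English description precedes it below -/
import Mathlib

section
/- Let M be a positive integer, let H_1, …, H_M, W be M+1 mutually independent random variables each exponentially distributed with rate 1, let P_T > 0, ρ ≥ 0 and m ≥ 0, and set Y = (max_{1≤i≤M} H_i)/(1/P_T + ρ m W). Then for every y ≥ 0, the cumulative distribution function of Y satisfies P(Y ≤ y) = ∑_{i=0}^{M} C(M,i) (−1)^i e^{−i y/P_T} / (1 + i y ρ m), where C(M,i) is the binomial coefficient. -/
open MeasureTheory ProbabilityTheory

section Helpers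

open Real Set Filter

/-- Mutual independence of a family of random variables is preserved by a.e. modification. -/
lemma iIndepFun_ae_congr {Ω ι : Type*} [MeasurableSpace Ω] {μ : Measure Ω}
    {β : ι → Type*} {m : ∀ i, MeasurableSpace (β i)} {f g : ∀ i, Ω → β i}
    (h : iIndepFun (m := m) f μ) (hfg : ∀ i, f i =ᵐ[μ] g i) : iIndepFun (m := m) g μ := by
  classical
  rw [iIndepFun_iff] at h ⊢
  intro s f' hf'
  choose t ht hteq using fun i hi => hf' i hi
  have hae : ∀ᵐ ω ∂μ, ∀ i ∈ s, f i ω = g i ω :=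
    (MeasureTheory.ae_ball_iff s.countable_toSet).2 fun i _ => hfg i
  classical
  let A : ι → Set Ω := fun i => if hi : i ∈ s then f i ⁻¹' t i hi else Set.univ
  have hmemA : ∀ (i) (hi : i ∈ s) ω, ω ∈ A i ↔ f i ω ∈ t i hi := by
    intro i hi ω; simp only [A, dif_pos hi, Set.mem_preimage]
  have hAeq : ∀ i ∈ s, f' i =ᵐ[μ] A i := by
    intro i hi
    rw [Filter.eventuallyEq_set]
    filter_upwards [hfg i] with ω hω
    rw [← hteq i hi, hmemA i hi]
    simp [Set.mem_preimage, hω]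
  have h1 : μ (⋂ i ∈ s, f' i) = μ (⋂ i ∈ s, A i) := by
    apply measure_congr
    rw [Filter.eventuallyEq_set]
    filter_upwards [hae] with ω hω
    simp only [Set.mem_iInter]
    refine forall_congr' fun i => forall_congr' fun hi => ?_
    rw [← hteq i hi, hmemA i hi, Set.mem_preimage, hω i hi]
  rw [h1, h s (f' := A) fun i hi => ?_]
  · exact Finset.prod_congr rfl fun i hi => (measure_congr (hAeq i hi)).symm
  · refine ⟨t i hi, ht i hi, ?_⟩
    ext ω; rw [Set.mem_preimage, hmemA i hi]


lemma expMeasure_eq_withDensity (r : ℝ) :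
    expMeasure r = MeasureTheory.volume.withDensity (exponentialPDF r) := rfl

lemma expMeasure_Iic {r : ℝ} (hr : 0 < r) (t : ℝ) :
    expMeasure r (Set.Iic t)
      = ENNReal.ofReal (if 0 ≤ t then 1 - Real.exp (-(r * t)) else 0) := by
  rw [expMeasure_eq_withDensity, withDensity_apply _ measurableSet_Iic]
  exact lintegral_exponentialPDF_eq_antiDeriv hr t

lemma expMeasure_Iio_zero {r : ℝ} : expMeasure r (Set.Iio 0) = 0 := by
  rw [expMeasure_eq_withDensity, withDensity_apply _ measurableSet_Iio]
  exact lintegral_exponentialPDF_of_nonpos le_rfl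

lemma lintegral_exp_neg_mul_expMeasure {a : ℝ} (ha : 0 ≤ a) :
    ∫⁻ w, ENNReal.ofReal (Real.exp (-(a * w))) ∂(expMeasure 1)
      = (ENNReal.ofReal (1 + a))⁻¹ := by
  have h1a : (0:ℝ) < 1 + a := by linarith
  have hm1 : Measurable (exponentialPDF 1) := (measurable_exponentialPDFReal 1).ennreal_ofReal
  have hm2 : Measurable (exponentialPDF (1 + a)) :=
    (measurable_exponentialPDFReal (1 + a)).ennreal_ofReal
  rw [expMeasure_eq_withDensity, lintegral_withDensity_eq_lintegral_mul _ hm1 (by fun_prop)]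
  have hpt : ∀ w, (exponentialPDF 1 * fun w => ENNReal.ofReal (Real.exp (-(a * w)))) w
      = (ENNReal.ofReal (1 + a))⁻¹ * exponentialPDF (1 + a) w := by
    intro w
    simp only [Pi.mul_apply]
    rcases le_or_gt 0 w with hw | hw
    · rw [exponentialPDF_of_nonneg hw, exponentialPDF_of_nonneg hw, one_mul,
        ← ENNReal.ofReal_mul (Real.exp_pos _).le, ← Real.exp_add,
        ENNReal.ofReal_mul h1a.le, ← mul_assoc,
        ENNReal.inv_mul_cancel (by simp [ENNReal.ofReal_pos, h1a]) ENNReal.ofReal_ne_top,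
        one_mul]
      ring_nf
    · rw [exponentialPDF_of_neg hw, exponentialPDF_of_neg hw, zero_mul, mul_zero]
  rw [lintegral_congr hpt,
    lintegral_const_mul _ hm2,
    lintegral_exponentialPDF_eq_one h1a, mul_one]

lemma integrable_exp_neg_mul_expMeasure {a : ℝ} (ha : 0 ≤ a) :
    MeasureTheory.Integrable (fun w => Real.exp (-(a * w))) (expMeasure 1) := by
  refine ⟨(by fun_prop : Measurable fun w => Real.exp (-(a * w))).aestronglyMeasurable, ?_⟩
  rw [hasFiniteIntegral_iff_ofReal (Filter.Eventually.of_forall fun w => (Real.exp_pos _).le),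
    lintegral_exp_neg_mul_expMeasure ha]
  exact ENNReal.inv_lt_top.2 (ENNReal.ofReal_pos.2 (by linarith))

lemma integral_exp_neg_mul_expMeasure {a : ℝ} (ha : 0 ≤ a) :
    ∫ w, Real.exp (-(a * w)) ∂(expMeasure 1) = (1 + a)⁻¹ := by
  rw [integral_eq_lintegral_of_nonneg_ae
      (Filter.Eventually.of_forall fun w => (Real.exp_pos _).le)
      (by fun_prop : Measurable fun w => Real.exp (-(a * w))).aestronglyMeasurable,
    lintegral_exp_neg_mul_expMeasure ha, ← ENNReal.ofReal_inv_of_pos (by linarith),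
    ENNReal.toReal_ofReal (by positivity)]

lemma one_sub_pow_eq_sum (t : ℝ) (n : ℕ) :
    (1 - t) ^ n = ∑ i ∈ Finset.range (n + 1), (n.choose i : ℝ) * (-1) ^ i * t ^ i := by
  have h := add_pow (-t) (1 : ℝ) n
  rw [show (-t) + 1 = 1 - t by ring] at h
  rw [h]
  refine Finset.sum_congr rfl fun i _ => ?_
  rw [neg_pow]
  ring

end Helpers

/-- Lemma 1 (eq. (18)): CDF of the TAS SNR `Y = max_i H_i / (1/P_T + ρ m W)` where
`H_1, …, H_M, W` are mutually independent `Exp(1)` random variables. -/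
theorem tas_snr_cdf {Ω : Type*} [MeasurableSpace Ω] (μ : Measure Ω)
    [IsProbabilityMeasure μ] (M : ℕ) (hM : 0 < M) (H : Fin M → Ω → ℝ) (W : Ω → ℝ)
    (hindep : iIndepFun
      (fun o : Option (Fin M) => o.elim W H) μ)
    (hH : ∀ i, Measure.map (H i) μ = expMeasure 1)
    (hW : Measure.map W μ = expMeasure 1)
    (P_T ρ m : ℝ) (hPT : 0 < P_T) (hρ : 0 ≤ ρ) (hm : 0 ≤ m)
    (Y : Ω → ℝ)
    (hY : ∀ ω, Y ω =
      (Finset.univ.sup' (Finset.univ_nonempty_iff.mpr ⟨⟨0, hM⟩⟩) fun i => H i ω) /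
        (1 / P_T + ρ * m * W ω))
    (y : ℝ) (hy : 0 ≤ y) :
    (μ {ω | Y ω ≤ y}).toReal =
      ∑ i ∈ Finset.range (M + 1),
        (M.choose i : ℝ) * (-1) ^ i * Real.exp (-(i * y) / P_T) / (1 + i * y * ρ * m) := by
  classical
  haveI hPexp : IsProbabilityMeasure (expMeasure 1) :=
    isProbabilityMeasure_expMeasure one_pos
  -- a.e. measurability of the original random variables
  have hWae : AEMeasurable W μ := by
    by_contra h
    have h0 := Measure.map_of_not_aemeasurable h
    rw [hW] at h0
    have h1 := hPexp.measure_univ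
    rw [h0] at h1
    simp at h1
  have hHae : ∀ i, AEMeasurable (H i) μ := by
    intro i
    by_contra h
    have h0 := Measure.map_of_not_aemeasurable h
    rw [hH i] at h0
    have h1 := hPexp.measure_univ
    rw [h0] at h1
    simp at h1
  -- measurable modifications
  set W' : Ω → ℝ := hWae.mk W with hW'def
  set H' : Fin M → Ω → ℝ := fun i => (hHae i).mk (H i) with hH'def
  have hW'm : Measurable W' := hWae.measurable_mk
  have hH'm : ∀ i, Measurable (H' i) := fun i => (hHae i).measurable_mk
  have hfae : ∀ o : Option (Fin M), (o.elim W H : Ω → ℝ) =ᵐ[μ] o.elim W' H' := by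
    rintro (_ | i)
    · exact hWae.ae_eq_mk
    · exact (hHae i).ae_eq_mk
  have hindep' : iIndepFun
      (fun o : Option (Fin M) => o.elim W' H') μ := iIndepFun_ae_congr hindep hfae
  have hmapW' : μ.map W' = expMeasure 1 := by
    rw [← Measure.map_congr hWae.ae_eq_mk, hW]
  have hmapH' : ∀ i, μ.map (H' i) = expMeasure 1 := fun i => by
    rw [← Measure.map_congr (hHae i).ae_eq_mk, hH i]
  set hne : (Finset.univ : Finset (Fin M)).Nonempty :=
    Finset.univ_nonempty_iff.mpr ⟨⟨0, hM⟩⟩ with hnedef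
  -- the max of the modified variables
  have hmaxF : Measurable fun v : Fin M → ℝ => Finset.univ.sup' hne v := by
    have h1 : Measurable (Finset.univ.sup' hne (fun i (v : Fin M → ℝ) => v i)) :=
      Finset.measurable_sup' hne fun i _ => measurable_pi_apply i
    have h2 : (fun v : Fin M → ℝ => Finset.univ.sup' hne v)
        = Finset.univ.sup' hne (fun i (v : Fin M → ℝ) => v i) := by
      funext v
      rw [Finset.sup'_apply]
    rw [h2]
    exact h1
  set Z' : Ω → ℝ := fun ω => Finset.univ.sup' hne fun i => H' i ω with hZ'def
  have hZ'm : Measurable Z' := hmaxF.comp (measurable_pi_lambda _ fun i => hH'm i)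
  -- independence of W' and Z'
  have hf'm : ∀ o : Option (Fin M), Measurable (o.elim W' H') := by
    rintro (_ | i)
    exacts [hW'm, hH'm i]
  have hdisj : Disjoint ({none} : Finset (Option (Fin M))) (Finset.univ.image some) := by
    simp [Finset.disjoint_left]
  have hWH := hindep'.indepFun_finset {none} (Finset.univ.image some) hdisj hf'm
  have hWZ : IndepFun W' Z' μ := by
    have hgW : Measurable fun (v : { o : Option (Fin M) // o ∈ ({none} : Finset (Option (Fin M))) } → ℝ) =>
        v ⟨none, Finset.mem_singleton_self _⟩ := measurable_pi_apply _
    have hgH : Measurable fun (v : { o : Option (Fin M) // o ∈ Finset.image some Finset.univ } → ℝ) =>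
        Finset.univ.sup' hne fun i : Fin M =>
          v ⟨some i, Finset.mem_image_of_mem some (Finset.mem_univ i)⟩ :=
      hmaxF.comp (measurable_pi_lambda _ fun i => measurable_pi_apply _)
    exact hWH.comp hgW hgH
  have hjoint : μ.map (fun ω => (W' ω, Z' ω)) = (expMeasure 1).prod (μ.map Z') := by
    rw [(indepFun_iff_map_prod_eq_prod_map_map hW'm.aemeasurable hZ'm.aemeasurable).1 hWZ,
      hmapW']
  haveI : IsProbabilityMeasure (μ.map Z') := Measure.isProbabilityMeasure_map hZ'm.aemeasurable
  -- the event as a product set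
  have hA : MeasurableSet {p : ℝ × ℝ | p.2 ≤ y / P_T + y * (ρ * m) * p.1} :=
    measurableSet_le measurable_snd
      ((measurable_fst.const_mul (y * (ρ * m))).const_add (y / P_T))
  have hWnonneg : ∀ᵐ ω ∂μ, 0 ≤ W ω := by
    rw [ae_iff]
    have h1 : {ω | ¬ 0 ≤ W ω} = W ⁻¹' Set.Iio 0 := by
      ext ω
      simp [not_le]
    rw [h1, ← Measure.map_apply_of_aemeasurable hWae measurableSet_Iio, hW,
      expMeasure_Iio_zero]
  have hEvent : μ {ω | Y ω ≤ y}
      = μ ((fun ω => (W' ω, Z' ω)) ⁻¹' {p : ℝ × ℝ | p.2 ≤ y / P_T + y * (ρ * m) * p.1}) := by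
    apply measure_congr
    rw [Filter.eventuallyEq_set]
    have hallH : ∀ᵐ ω ∂μ, ∀ i, H i ω = H' i ω := ae_all_iff.2 fun i => (hHae i).ae_eq_mk
    filter_upwards [hWae.ae_eq_mk, hallH, hWnonneg] with ω h1 h2 h3
    have hd : 0 < 1 / P_T + ρ * m * W ω := by positivity
    have hsup : (Finset.univ.sup' hne fun i => H i ω) = Z' ω :=
      Finset.sup'_congr hne rfl fun i _ => h2 i
    have h1' : W ω = W' ω := h1
    have harith : y * (1 / P_T + ρ * m * W ω) = y / P_T + y * (ρ * m) * W' ω := by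
      rw [← h1']
      field_simp
    simp only [Set.mem_setOf_eq, Set.mem_preimage, hY ω]
    rw [div_le_iff₀ hd, hsup, harith]
  -- compute the CDF of Z'
  have hnu : ∀ t : ℝ, (μ.map Z') (Set.Iic t) = (expMeasure 1 (Set.Iic t)) ^ M := by
    intro t
    rw [Measure.map_apply hZ'm measurableSet_Iic]
    have hset : Z' ⁻¹' Set.Iic t
        = ⋂ o : Option (Fin M), o.elim Set.univ (fun i => H' i ⁻¹' Set.Iic t) := by
      ext ω
      simp only [Set.mem_preimage, Set.mem_Iic, Set.mem_iInter, hZ'def, Option.forall,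
        Option.elim, Set.mem_univ, true_and, Finset.sup'_le_iff, Finset.mem_univ,
        true_implies]
    rw [hset, hindep'.meas_iInter ?_]
    · rw [Fintype.prod_option]
      simp only [Option.elim]
      rw [measure_univ, one_mul]
      have hfac : ∀ i : Fin M, μ (H' i ⁻¹' Set.Iic t) = expMeasure 1 (Set.Iic t) := fun i => by
        rw [← hmapH' i, Measure.map_apply (hH'm i) measurableSet_Iic]
      rw [Finset.prod_congr rfl fun i _ => hfac i, Finset.prod_const, Finset.card_univ,
        Fintype.card_fin]
    · rintro (_ | i)
      · exact ⟨Set.univ, MeasurableSet.univ, by simp⟩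
      · exact ⟨Set.Iic t, measurableSet_Iic, rfl⟩
  -- the main lintegral formula
  have hmain : μ {ω | Y ω ≤ y}
      = ∫⁻ w, (expMeasure 1 (Set.Iic (y / P_T + y * (ρ * m) * w))) ^ M ∂(expMeasure 1) := by
    rw [hEvent, ← Measure.map_apply_of_aemeasurable (hW'm.prodMk hZ'm).aemeasurable hA,
      hjoint, Measure.prod_apply hA]
    exact lintegral_congr fun w => by rw [show (Prod.mk w ⁻¹'
      {p : ℝ × ℝ | p.2 ≤ y / P_T + y * (ρ * m) * p.1})
        = Set.Iic (y / P_T + y * (ρ * m) * w) from rfl, hnu]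
  set g : ℝ → ℝ := fun w => (1 - Real.exp (-(y / P_T + y * (ρ * m) * w))) ^ M with hgdef
  have hexp_ae : ∀ᵐ w ∂(expMeasure 1), 0 ≤ w := by
    rw [ae_iff]
    have h1 : {w : ℝ | ¬ 0 ≤ w} = Set.Iio 0 := by
      ext w
      simp [not_le]
    rw [h1, expMeasure_Iio_zero]
  have hg_nonneg : 0 ≤ᵐ[expMeasure 1] g := by
    filter_upwards [hexp_ae] with w hw
    have hc : 0 ≤ y / P_T + y * (ρ * m) * w := by positivity
    have h1 : Real.exp (-(y / P_T + y * (ρ * m) * w)) ≤ 1 :=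
      Real.exp_le_one_iff.2 (by linarith)
    simp only [hgdef, Pi.zero_apply]
    exact pow_nonneg (by linarith) M
  have hg_m : Measurable g := by
    rw [hgdef]
    fun_prop
  have htoReal : (μ {ω | Y ω ≤ y}).toReal = ∫ w, g w ∂(expMeasure 1) := by
    rw [hmain, integral_eq_lintegral_of_nonneg_ae hg_nonneg hg_m.aestronglyMeasurable]
    congr 1
    apply lintegral_congr_ae
    filter_upwards [hexp_ae] with w hw
    have hc : 0 ≤ y / P_T + y * (ρ * m) * w := by positivity
    have h1 : Real.exp (-(y / P_T + y * (ρ * m) * w)) ≤ 1 :=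
      Real.exp_le_one_iff.2 (by linarith)
    rw [expMeasure_Iic one_pos, if_pos hc, one_mul,
      ← ENNReal.ofReal_pow (by linarith)]
  rw [htoReal]
  have hgeq : ∀ w, g w = ∑ i ∈ Finset.range (M + 1),
      ((M.choose i : ℝ) * (-1) ^ i * Real.exp (-(i * y) / P_T))
        * Real.exp (-((i : ℝ) * (y * (ρ * m)) * w)) := by
    intro w
    simp only [hgdef]
    rw [one_sub_pow_eq_sum]
    refine Finset.sum_congr rfl fun i _ => ?_
    have hE : Real.exp ((i : ℝ) * -(y / P_T + y * (ρ * m) * w))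
        = Real.exp (-((i : ℝ) * y) / P_T) * Real.exp (-((i : ℝ) * (y * (ρ * m)) * w)) := by
      rw [← Real.exp_add]
      congr 1
      ring
    rw [← Real.exp_nat_mul, hE]
    ring
  have hsum : ∫ w, g w ∂(expMeasure 1) = ∑ i ∈ Finset.range (M + 1),
      ((M.choose i : ℝ) * (-1) ^ i * Real.exp (-(i * y) / P_T))
        * ∫ w, Real.exp (-((i : ℝ) * (y * (ρ * m)) * w)) ∂(expMeasure 1) := by
    rw [integral_congr_ae (Filter.Eventually.of_forall hgeq),
      integral_finset_sum (μ := expMeasure 1) (Finset.range (M + 1))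
        (f := fun (i : ℕ) (w : ℝ) =>
          ((M.choose i : ℝ) * (-1) ^ i * Real.exp (-(i * y) / P_T))
            * Real.exp (-((i : ℝ) * (y * (ρ * m)) * w)))
        (fun i _ =>
          (integrable_exp_neg_mul_expMeasure (a := (i : ℝ) * (y * (ρ * m)))
            (mul_nonneg (Nat.cast_nonneg i)
              (mul_nonneg hy (mul_nonneg hρ hm)))).const_mul _)]
    exact Finset.sum_congr rfl fun i _ => integral_const_mul _ _
  rw [hsum]
  refine Finset.sum_congr rfl fun i _ => ?_
  rw [integral_exp_neg_mul_expMeasure (a := (i : ℝ) * (y * (ρ * m)))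
    (mul_nonneg (Nat.cast_nonneg i) (mul_nonneg hy (mul_nonneg hρ hm))), div_eq_mul_inv]
  ring_nf
end

section
/- Let Y > 0, m > 0, d > 0, P_T > 0 and R > 0. Then ∫_0^R ∫_0^{2π} [exp(−Y r²/P_T) / (1 + m Y r²/(r² + d² − 2 r d cos θ))] r dθ dr = (π P_T / Y)·(1 − exp(−Y R²/P_T)) − π m Y ∫_0^{R²} exp(−Y r/P_T)·r / √(((1+mY) r + d²)² − 4 r d²) dr, where the inner integrand is understood with its value at the measure-zero set where r² + d² − 2 r d cos θ = 0 being irrelevant to the Lebesgue integral. -/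
open MeasureTheory Real

lemma cos_integral (a b : ℝ) (hb : 0 < b) (hab : b < a) :
    ∫ θ in (0:ℝ)..(2 * π), 1 / (a - b * Real.cos θ)
      = 2 * π / Real.sqrt (a ^ 2 - b ^ 2) := by
  have hq : 0 < a - b := by linarith
  have hS : 0 < a ^ 2 - b ^ 2 := by nlinarith
  set k : ℝ := Real.sqrt ((a + b) / (a - b)) with hkdef
  have hk2 : k ^ 2 = (a + b) / (a - b) := Real.sq_sqrt (le_of_lt (div_pos (by linarith) hq))
  have hk2' : k ^ 2 * (a - b) = a + b := by rw [hk2]; field_simp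
  have hk1 : 1 < k := by
    have h1 : 1 < k ^ 2 := by rw [hk2, lt_div_iff₀ hq]; linarith
    nlinarith [Real.sqrt_nonneg ((a + b) / (a - b))]
  have hk0 : 0 < k := by linarith
  have hsqS : Real.sqrt (a ^ 2 - b ^ 2) = k * (a - b) := by
    have h : a ^ 2 - b ^ 2 = ((a + b) / (a - b)) * (a - b) ^ 2 := by field_simp; ring
    rw [h, Real.sqrt_mul (le_of_lt (div_pos (by linarith) hq)), Real.sqrt_sq hq.le]
  have hD : ∀ θ : ℝ, 0 < (1 + k) - (k - 1) * Real.cos θ := by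
    intro θ
    nlinarith [Real.cos_le_one θ, Real.neg_one_le_cos θ]
  have key : ∀ θ : ℝ, HasDerivAt
      (fun θ => (θ + 2 * Real.arctan ((k - 1) * Real.sin θ /
          ((1 + k) - (k - 1) * Real.cos θ))) / Real.sqrt (a ^ 2 - b ^ 2))
      (1 / (a - b * Real.cos θ)) θ := by
    intro θ
    have hDθ : ((1 + k) - (k - 1) * Real.cos θ) ≠ 0 := (hD θ).ne'
    have hDd : HasDerivAt (fun θ : ℝ => (1 + k) - (k - 1) * Real.cos θ)
        ((k - 1) * Real.sin θ) θ := by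
      have := ((Real.hasDerivAt_cos θ).const_mul (k - 1)).const_sub (1 + k)
      exact this.congr_deriv (by ring)
    have hu : HasDerivAt (fun θ => (k - 1) * Real.sin θ /
        ((1 + k) - (k - 1) * Real.cos θ))
        (((k - 1) * Real.cos θ * ((1 + k) - (k - 1) * Real.cos θ) -
          (k - 1) * Real.sin θ * ((k - 1) * Real.sin θ)) /
          ((1 + k) - (k - 1) * Real.cos θ) ^ 2) θ :=
      ((Real.hasDerivAt_sin θ).const_mul (k - 1)).div hDd hDθ
    have harc := hu.arctan
    have hH := ((hasDerivAt_id θ).add (harc.const_mul 2)).div_const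
        (Real.sqrt (a ^ 2 - b ^ 2))
    refine hH.congr_deriv (Eq.symm ?_)
    -- algebra
    set c := Real.cos θ with hc
    set s := Real.sin θ with hs
    have hsc : s ^ 2 = 1 - c ^ 2 := by
      have := Real.sin_sq_add_cos_sq θ; nlinarith
    have hc1 : c ≤ 1 := Real.cos_le_one θ
    have hc1' : -1 ≤ c := Real.neg_one_le_cos θ
    have hP : 0 < a - b * c := by nlinarith
    have hDc : 0 < (1 + k) - (k - 1) * c := hD θ
    have hN : (k - 1) * c * ((1 + k) - (k - 1) * c) - (k - 1) * s * ((k - 1) * s)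
        = (k ^ 2 - 1) * c - (k - 1) ^ 2 := by linear_combination (-(k - 1) ^ 2) * hsc
    have h1 : 1 + ((k - 1) * s / ((1 + k) - (k - 1) * c)) ^ 2
        = (2 * (k ^ 2 + 1) - 2 * (k ^ 2 - 1) * c) / ((1 + k) - (k - 1) * c) ^ 2 := by
      field_simp
      linear_combination ((k - 1) ^ 2) * hsc
    have hE : 0 < 2 * (k ^ 2 + 1) - 2 * (k ^ 2 - 1) * c := by nlinarith
    rw [hN, h1, hsqS]
    have hX : (2 * (k ^ 2 + 1) - 2 * (k ^ 2 - 1) * c) * (a - b) = 4 * (a - b * c) := by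
      linear_combination (2 - 2 * c) * hk2'
    have h2 : 1 / ((2 * (k ^ 2 + 1) - 2 * (k ^ 2 - 1) * c) / (1 + k - (k - 1) * c) ^ 2) *
        (((k ^ 2 - 1) * c - (k - 1) ^ 2) / (1 + k - (k - 1) * c) ^ 2)
        = ((k ^ 2 - 1) * c - (k - 1) ^ 2) / (2 * (k ^ 2 + 1) - 2 * (k ^ 2 - 1) * c) := by
      rw [one_div_div]
      field_simp
    rw [h2]
    have h3 : 1 + 2 * (((k ^ 2 - 1) * c - (k - 1) ^ 2) / (2 * (k ^ 2 + 1) - 2 * (k ^ 2 - 1) * c))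
        = 4 * k / (2 * (k ^ 2 + 1) - 2 * (k ^ 2 - 1) * c) := by
      rw [← mul_div_assoc, one_add_div hE.ne']
      congr 1
      ring
    rw [h3, div_div, div_eq_div_iff hP.ne' (by positivity : ((2 * (k ^ 2 + 1) - 2 * (k ^ 2 - 1) * c) * (k * (a - b))) ≠ 0)]
    linear_combination k * hX
  have hcont : IntervalIntegrable (fun θ => 1 / (a - b * Real.cos θ))
      MeasureTheory.volume 0 (2 * π) := by
    apply Continuous.intervalIntegrable
    apply Continuous.div continuous_const
    · exact continuous_const.sub (continuous_const.mul Real.continuous_cos)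
    · intro θ
      have h2 : b * Real.cos θ < a := by nlinarith [Real.cos_le_one θ, Real.neg_one_le_cos θ]
      intro h; rw [sub_eq_zero] at h; exact absurd h.symm h2.ne
  rw [intervalIntegral.integral_eq_sub_of_hasDerivAt (fun θ _ => key θ) hcont]
  simp [Real.sin_two_pi, hsqS]

lemma cont_inv (a b : ℝ) (hb : 0 < b) (hab : b < a) :
    Continuous fun θ : ℝ => 1 / (a - b * Real.cos θ) := by
  apply Continuous.div continuous_const
  · exact continuous_const.sub (continuous_const.mul Real.continuous_cos)
  · intro θ
    have h2 : b * Real.cos θ < a := by nlinarith [Real.cos_le_one θ, Real.neg_one_le_cos θ]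
    intro h; rw [sub_eq_zero] at h; exact absurd h.symm h2.ne

/-- Appendix B (eq. (50)): simplification of the TAS double integral for `α = 2`
and zero target secrecy rate. -/
theorem tas_double_integral_simplification (Y m d P_T R : ℝ)
    (hY : 0 < Y) (hm : 0 < m) (hd : 0 < d) (hPT : 0 < P_T) (hR : 0 < R) :
    ∫ r in (0:ℝ)..R, (∫ θ in (0:ℝ)..(2 * π),
        Real.exp (-Y * r ^ 2 / P_T) /
          (1 + m * Y * r ^ 2 / (r ^ 2 + d ^ 2 - 2 * r * d * Real.cos θ))) * r
      = π * P_T / Y * (1 - Real.exp (-Y * R ^ 2 / P_T))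
        - π * m * Y * ∫ r in (0:ℝ)..(R ^ 2),
            Real.exp (-Y * r / P_T) * r /
              Real.sqrt (((1 + m * Y) * r + d ^ 2) ^ 2 - 4 * r * d ^ 2) := by
  have hpi : (0:ℝ) < π := Real.pi_pos
  have hw0 : 0 < m * Y := mul_pos hm hY
  have hGu : ∀ u : ℝ, 0 < ((1 + m * Y) * u + d ^ 2) ^ 2 - 4 * u * d ^ 2 := by
    intro u
    rcases lt_trichotomy u 0 with h | h | h
    · nlinarith [sq_nonneg ((1 + m * Y) * u + d ^ 2),
        mul_pos (mul_pos (by norm_num : (0:ℝ) < 4) (neg_pos.2 h)) (pow_pos hd 2)]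
    · subst h; norm_num; positivity
    · nlinarith [sq_nonneg (u - d ^ 2), mul_pos (mul_pos hw0 h) (pow_pos hd 2),
        sq_nonneg (m * Y * u), mul_pos hw0 (mul_pos h h)]
  -- inner integral
  have inner : Set.EqOn
      (fun r => (∫ θ in (0:ℝ)..(2 * π),
        Real.exp (-Y * r ^ 2 / P_T) /
          (1 + m * Y * r ^ 2 / (r ^ 2 + d ^ 2 - 2 * r * d * Real.cos θ))) * r)
      (fun r => 2 * π * (Real.exp (-Y * r ^ 2 / P_T) * r)
        - 2 * π * m * Y * (Real.exp (-Y * r ^ 2 / P_T) * r ^ 3 /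
            Real.sqrt (((1 + m * Y) * r ^ 2 + d ^ 2) ^ 2 - 4 * r ^ 2 * d ^ 2)))
      (Set.uIcc (0:ℝ) R) := by
    intro r hrmem
    dsimp only
    rw [Set.uIcc_of_le hR.le] at hrmem
    rcases hrmem.1.eq_or_lt with h0 | hr
    · subst h0; norm_num
    · -- r > 0
      have hb : 0 < 2 * r * d := by positivity
      have hab : 2 * r * d < (1 + m * Y) * r ^ 2 + d ^ 2 := by
        nlinarith [sq_nonneg (r - d), mul_pos hw0 (pow_pos hr 2)]
      have hnull : MeasureTheory.volume {θ : ℝ | Real.cos θ = 1} = 0 := by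
        apply Set.Countable.measure_zero
        apply Set.Countable.mono _ (Set.countable_range (fun n : ℤ => (n : ℝ) * (2 * π)))
        intro θ hθ
        obtain ⟨n, hn⟩ := Real.cos_eq_one_iff θ |>.mp hθ
        exact ⟨n, hn⟩
      have hae : ∀ᵐ θ : ℝ, θ ∈ Set.uIoc (0:ℝ) (2 * π) →
          Real.exp (-Y * r ^ 2 / P_T) /
            (1 + m * Y * r ^ 2 / (r ^ 2 + d ^ 2 - 2 * r * d * Real.cos θ))
          = Real.exp (-Y * r ^ 2 / P_T) *
            (1 - m * Y * r ^ 2 * (1 / ((1 + m * Y) * r ^ 2 + d ^ 2 - 2 * r * d * Real.cos θ))) := by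
        rw [MeasureTheory.ae_iff]
        refine measure_mono_null ?_ hnull
        intro θ hθ
        simp only [Set.mem_setOf_eq, Classical.not_imp] at hθ
        simp only [Set.mem_setOf_eq]
        by_contra hcos
        apply hθ.2
        have hclt : Real.cos θ < 1 := lt_of_le_of_ne (Real.cos_le_one θ) hcos
        have hQ : 0 < r ^ 2 + d ^ 2 - 2 * r * d * Real.cos θ := by
          nlinarith [sq_nonneg (r - d)]
        have hQ2 : 0 < (1 + m * Y) * r ^ 2 + d ^ 2 - 2 * r * d * Real.cos θ := by
          nlinarith [mul_pos hw0 (pow_pos hr 2)]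
        have hden : 0 < 1 + m * Y * r ^ 2 / (r ^ 2 + d ^ 2 - 2 * r * d * Real.cos θ) := by
          have := div_pos (mul_pos hw0 (pow_pos hr 2)) hQ
          linarith
        have hQne := hQ.ne'
        have hQ2ne := hQ2.ne'
        have hQ2eq : (1 + m * Y) * r ^ 2 + d ^ 2 - 2 * r * d * Real.cos θ
            = m * Y * r ^ 2 + (r ^ 2 + d ^ 2 - 2 * r * d * Real.cos θ) := by ring
        have hAQ : m * Y * r ^ 2 + (r ^ 2 + d ^ 2 - 2 * r * d * Real.cos θ) ≠ 0 := by
          rw [← hQ2eq]; exact hQ2ne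
        rw [div_eq_iff hden.ne', mul_one_div, one_sub_div hQ2ne, one_add_div hQne, hQ2eq]
        rw [add_sub_cancel_left, mul_assoc, div_mul_div_comm,
          add_comm (r ^ 2 + d ^ 2 - 2 * r * d * Real.cos θ) (m * Y * r ^ 2),
          mul_comm (r ^ 2 + d ^ 2 - 2 * r * d * Real.cos θ)
            (m * Y * r ^ 2 + (r ^ 2 + d ^ 2 - 2 * r * d * Real.cos θ)),
          div_self (mul_ne_zero hAQ hQne), mul_one]
      rw [intervalIntegral.integral_congr_ae hae]
      rw [intervalIntegral.integral_const_mul, intervalIntegral.integral_sub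
        intervalIntegrable_const
        (((cont_inv _ _ hb hab).intervalIntegrable _ _).const_mul _),
        intervalIntegral.integral_const_mul, cos_integral _ _ hb hab]
      have hSS : ((1 + m * Y) * r ^ 2 + d ^ 2) ^ 2 - (2 * r * d) ^ 2
          = ((1 + m * Y) * r ^ 2 + d ^ 2) ^ 2 - 4 * r ^ 2 * d ^ 2 := by ring
      rw [hSS]
      simp only [intervalIntegral.integral_const, smul_eq_mul, sub_zero, mul_one]
      have hs0 : Real.sqrt (((1 + m * Y) * r ^ 2 + d ^ 2) ^ 2 - 4 * r ^ 2 * d ^ 2) ≠ 0 := by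
        have h := hGu (r ^ 2)
        have : ((1 + m * Y) * r ^ 2 + d ^ 2) ^ 2 - 4 * r ^ 2 * d ^ 2
            = ((1 + m * Y) * r ^ 2 + d ^ 2) ^ 2 - 4 * (r ^ 2) * d ^ 2 := by ring
        rw [this]
        exact (Real.sqrt_pos.2 h).ne'
      field_simp
  rw [intervalIntegral.integral_congr inner]
  have hcont1 : Continuous fun r : ℝ => 2 * π * (Real.exp (-Y * r ^ 2 / P_T) * r) := by
    fun_prop
  have hsq : ∀ u : ℝ, Real.sqrt (((1 + m * Y) * u + d ^ 2) ^ 2 - 4 * u * d ^ 2) ≠ 0 :=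
    fun u => (Real.sqrt_pos.2 (hGu u)).ne'
  have hcontg : Continuous fun u : ℝ => Real.exp (-Y * u / P_T) * u /
      Real.sqrt (((1 + m * Y) * u + d ^ 2) ^ 2 - 4 * u * d ^ 2) := by
    apply Continuous.div
    · fun_prop
    · exact Real.continuous_sqrt.comp (by fun_prop)
    · exact hsq
  have hcont2 : Continuous fun r : ℝ => 2 * π * m * Y * (Real.exp (-Y * r ^ 2 / P_T) * r ^ 3 /
      Real.sqrt (((1 + m * Y) * r ^ 2 + d ^ 2) ^ 2 - 4 * r ^ 2 * d ^ 2)) := by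
    apply Continuous.mul continuous_const
    apply Continuous.div
    · fun_prop
    · exact Real.continuous_sqrt.comp (by fun_prop)
    · exact fun r => hsq (r ^ 2)
  rw [intervalIntegral.integral_sub (hcont1.intervalIntegrable _ _)
    (hcont2.intervalIntegrable _ _)]
  have hA : ∫ r in (0:ℝ)..R, 2 * π * (Real.exp (-Y * r ^ 2 / P_T) * r)
      = π * P_T / Y * (1 - Real.exp (-Y * R ^ 2 / P_T)) := by
    have hderiv : ∀ r : ℝ, HasDerivAt (fun r => -(π * P_T / Y) * Real.exp (-Y * r ^ 2 / P_T))
        (2 * π * (Real.exp (-Y * r ^ 2 / P_T) * r)) r := by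
      intro r
      have h1 : HasDerivAt (fun r : ℝ => -Y * r ^ 2 / P_T) (-Y * (2 * r) / P_T) r := by
        have h := ((hasDerivAt_pow 2 r).const_mul (-Y)).div_const P_T
        refine h.congr_deriv ?_
        norm_num
        try ring
      have h2 := (h1.exp).const_mul (-(π * P_T / Y))
      refine h2.congr_deriv ?_
      field_simp
    rw [intervalIntegral.integral_eq_sub_of_hasDerivAt (fun r _ => hderiv r)
      (hcont1.intervalIntegrable _ _)]
    norm_num [Real.exp_zero]
    try ring
  have hB : ∫ r in (0:ℝ)..R, 2 * π * m * Y * (Real.exp (-Y * r ^ 2 / P_T) * r ^ 3 /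
      Real.sqrt (((1 + m * Y) * r ^ 2 + d ^ 2) ^ 2 - 4 * r ^ 2 * d ^ 2))
      = π * m * Y * ∫ u in (0:ℝ)..(R ^ 2), Real.exp (-Y * u / P_T) * u /
          Real.sqrt (((1 + m * Y) * u + d ^ 2) ^ 2 - 4 * u * d ^ 2) := by
    rw [intervalIntegral.integral_const_mul]
    have key := intervalIntegral.integral_comp_smul_deriv
      (f := fun x : ℝ => x ^ 2) (f' := fun x : ℝ => 2 * x)
      (g := fun u : ℝ => (1 / 2) * (Real.exp (-Y * u / P_T) * u /
          Real.sqrt (((1 + m * Y) * u + d ^ 2) ^ 2 - 4 * u * d ^ 2)))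
      (a := (0:ℝ)) (b := R)
      (fun x _ => by simpa [two_mul] using hasDerivAt_pow 2 x)
      (by fun_prop)
      (continuous_const.mul hcontg)
    have lhs_eq : Set.EqOn
        (fun r : ℝ => Real.exp (-Y * r ^ 2 / P_T) * r ^ 3 /
          Real.sqrt (((1 + m * Y) * r ^ 2 + d ^ 2) ^ 2 - 4 * r ^ 2 * d ^ 2))
        (fun x : ℝ => (2 * x) • (((fun u : ℝ => (1 / 2) * (Real.exp (-Y * u / P_T) * u /
          Real.sqrt (((1 + m * Y) * u + d ^ 2) ^ 2 - 4 * u * d ^ 2))) ∘ fun x : ℝ => x ^ 2) x))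
        (Set.uIcc (0:ℝ) R) := by
      intro x _
      simp only [Function.comp_apply, smul_eq_mul]
      ring
    rw [intervalIntegral.integral_congr lhs_eq, key]
    norm_num
    try ring
  rw [hA, hB]
end

section
/- Let M ≥ 2 be an integer, f > 0, g > 0, ε ≥ 0, and set ε' = ε/(M−1). Then ∫_0^∞ [1 − (max(0, 1 − (ε' + f x)/(ε' + g)))^{M−1}] · M (1+x)^{−(M+1)} dx = 1 − 1/((1 + f/g)·(1 + ε'/g)^{M−1}). -/
open MeasureTheory Real

private lemma hasDerivAt_neg_inv_pow (k : ℕ) (x : ℝ) (hx : (1:ℝ) + x ≠ 0) :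
    HasDerivAt (fun y : ℝ => -(1 / (1 + y) ^ (k + 1)))
      (((k : ℝ) + 1) / (1 + x) ^ (k + 2)) x := by
  have h1 : HasDerivAt (fun y : ℝ => 1 + y) 1 x := by
    simpa using (hasDerivAt_id x).const_add (1:ℝ)
  have h2 := ((h1.pow (k+1)).inv (pow_ne_zero _ hx)).neg
  have h3 : HasDerivAt (fun y : ℝ => -(1 / (1 + y) ^ (k + 1)))
      (-(-(((k:ℝ)+1) * (1+x)^(k+1-1) * 1) / ((1+x)^(k+1))^2)) x := by
    simpa [one_div, Pi.neg_def, Pi.inv_def, Pi.pow_def] using h2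
  convert h3 using 1
  simp only [Nat.add_sub_cancel, mul_one, neg_neg, neg_div]
  rw [div_eq_div_iff (by positivity) (by positivity)]
  ring

private lemma hasDerivAt_F (n : ℕ) (f g ε' : ℝ)
    (hfg : f + g ≠ 0) (hεg : ε' + g ≠ 0) (x : ℝ) (hx : (1:ℝ) + x ≠ 0) :
    HasDerivAt (fun y : ℝ =>
        (g - f * y) ^ (n+1) / (((f + g) * (ε' + g) ^ n) * (1 + y) ^ (n+1))
          - 1 / (1 + y) ^ (n+1))
      ((1 - ((g - f * x) / (ε' + g)) ^ n) * (((n:ℝ) + 1) / (1 + x) ^ (n + 2))) x := by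
  have hA0 : ((f + g) * (ε' + g) ^ n) ≠ 0 := mul_ne_zero hfg (pow_ne_zero _ hεg)
  have h1 : HasDerivAt (fun y : ℝ => g - f * y) (-f) x := by
    simpa [Pi.sub_def] using (hasDerivAt_const x g).sub ((hasDerivAt_id x).const_mul f)
  have h2 : HasDerivAt (fun y : ℝ => 1 + y) 1 x := by
    simpa using (hasDerivAt_id x).const_add (1:ℝ)
  have hu := h1.pow (n+1)
  have hv := (h2.pow (n+1)).const_mul ((f + g) * (ε' + g) ^ n)
  have hv0 : ((f + g) * (ε' + g) ^ n) * (1 + x) ^ (n+1) ≠ 0 :=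
    mul_ne_zero hA0 (pow_ne_zero _ hx)
  have hw := hu.div hv hv0
  have hneg : HasDerivAt (fun y : ℝ => 1 / (1 + y) ^ (n + 1))
      (-(((n:ℝ)+1) / (1+x)^(n+2))) x := by
    simpa [Pi.neg_def] using (hasDerivAt_neg_inv_pow n x hx).neg
  have := hw.sub hneg
  refine this.congr_deriv ?_
  simp only [Pi.pow_apply]
  push_cast
  rw [div_pow, sub_neg_eq_add]
  field_simp
  ring

/-- Appendix D.1 (eqs. (46)–(47)): the key integral identity giving the
per-eavesdropper success probability of the TAB scheme. -/
theorem tab_per_eavesdropper_integral (M : ℕ) (hM : 2 ≤ M) (f g ε ε' : ℝ)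
    (hf : 0 < f) (hg : 0 < g) (hε : 0 ≤ ε) (hε' : ε' = ε / ((M : ℝ) - 1)) :
    ∫ x in Set.Ioi (0:ℝ),
        (1 - (max 0 (1 - (ε' + f * x) / (ε' + g))) ^ (M - 1)) *
          ((M : ℝ) / (1 + x) ^ (M + 1))
      = 1 - 1 / ((1 + f / g) * (1 + ε' / g) ^ (M - 1)) := by
  obtain ⟨n, rfl⟩ : ∃ n, M = n + 1 := ⟨M - 1, by omega⟩
  have hn : 1 ≤ n := by omega
  have hn' : (1:ℝ) ≤ (n:ℝ) := by exact_mod_cast hn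
  have hε'0 : 0 ≤ ε' := by
    rw [hε']
    push_cast
    apply div_nonneg hε (by linarith)
  have hεg : (0:ℝ) < ε' + g := by linarith
  have hfg : f + g ≠ 0 := by positivity
  have hA0 : ((f + g) * (ε' + g) ^ n) ≠ 0 := mul_ne_zero hfg (pow_ne_zero _ hεg.ne')
  set c : ℝ := g / f with hcdef
  have hc : 0 < c := div_pos hg hf
  simp only [Nat.add_sub_cancel]
  push_cast
  set φ : ℝ → ℝ := fun x =>
      (1 - (max 0 (1 - (ε' + f * x) / (ε' + g))) ^ n) * (((n:ℝ) + 1) / (1 + x) ^ (n + 2))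
    with hφ
  -- tail equality
  have tail_fun_eq : Set.EqOn φ (fun x => ((n:ℝ)+1) / (1 + x) ^ (n + 2)) (Set.Ioi c) := by
    intro x hx
    have hgx : g < x * f := (div_lt_iff₀ hf).mp hx
    have hmax : max 0 (1 - (ε' + f * x) / (ε' + g)) = 0 := by
      apply max_eq_left
      rw [sub_nonpos, le_div_iff₀ hεg]
      nlinarith
    simp [hφ, hmax, zero_pow (by omega : n ≠ 0)]
  have htail_deriv : ∀ x ∈ Set.Ici c,
      HasDerivAt (fun y : ℝ => -(1/(1+y)^(n+1))) (((n:ℝ)+1)/(1+x)^(n+2)) x := by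
    intro x hx
    have : c ≤ x := hx
    exact hasDerivAt_neg_inv_pow n x (by linarith)
  have tail_pos : ∀ x ∈ Set.Ioi c, 0 ≤ ((n:ℝ)+1)/(1+x)^(n+2) := by
    intro x hx
    have hcx : c < x := hx
    exact div_nonneg (by positivity) (pow_nonneg (by nlinarith) _)
  have htail_tendsto : Filter.Tendsto (fun y : ℝ => -(1/(1+y)^(n+1)))
      Filter.atTop (nhds 0) := by
    have h1 : Filter.Tendsto (fun y : ℝ => (1+y)^(n+1)) Filter.atTop Filter.atTop :=
      (Filter.tendsto_pow_atTop (by omega : n + 1 ≠ 0)).comp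
        (Filter.tendsto_atTop_add_const_left _ 1 Filter.tendsto_id)
    have := h1.inv_tendsto_atTop
    simpa [one_div] using this.neg
  have htail_int : IntegrableOn (fun x : ℝ => ((n:ℝ)+1)/(1+x)^(n+2)) (Set.Ioi c) :=
    integrableOn_Ioi_deriv_of_nonneg' htail_deriv tail_pos htail_tendsto
  have htail_val : ∫ x in Set.Ioi c, ((n:ℝ)+1)/(1+x)^(n+2) = 1/(1+c)^(n+1) := by
    rw [integral_Ioi_of_hasDerivAt_of_nonneg' htail_deriv tail_pos htail_tendsto]
    simp
  -- continuity of φ on Icc 0 c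
  have hφcont : ContinuousOn φ (Set.Icc 0 c) := by
    apply ContinuousOn.mul
    · apply continuousOn_const.sub
      apply ContinuousOn.pow
      apply ContinuousOn.sup continuousOn_const
      apply continuousOn_const.sub
      apply ContinuousOn.div_const
      exact (continuous_const.add (continuous_const.mul continuous_id)).continuousOn
    · apply continuousOn_const.div
      · exact ((continuous_const.add continuous_id).pow _).continuousOn
      · intro x hx
        have : (0:ℝ) ≤ x := hx.1
        positivity
  have hint1 : IntegrableOn φ (Set.Ioc 0 c) :=
    (hφcont.integrableOn_Icc).mono_set Set.Ioc_subset_Icc_self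
  have hint2 : IntegrableOn φ (Set.Ioi c) :=
    htail_int.congr_fun (fun x hx => (tail_fun_eq hx).symm) measurableSet_Ioi
  -- integral over Ioc
  have hIoc : ∫ x in Set.Ioc (0:ℝ) c, φ x
      = (1 - 1/(1+c)^(n+1)) - g^(n+1)/((f + g) * (ε' + g) ^ n) := by
    have hcongr : ∫ x in Set.Ioc (0:ℝ) c, φ x
        = ∫ x in Set.Ioc (0:ℝ) c,
            (1 - ((g - f*x)/(ε'+g))^n) * (((n:ℝ)+1)/(1+x)^(n+2)) := by
      apply setIntegral_congr_fun measurableSet_Ioc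
      intro x hx
      have hx0 : 0 < x := hx.1
      have hfx : x * f ≤ g := (le_div_iff₀ hf).mp hx.2
      have heq : 1 - (ε' + f*x)/(ε'+g) = (g - f*x)/(ε'+g) := by
        field_simp
        ring
      simp only [hφ]
      rw [heq, max_eq_right (div_nonneg (by nlinarith) hεg.le)]
    rw [hcongr, ← intervalIntegral.integral_of_le hc.le]
    have hderiv : ∀ x ∈ Set.uIcc (0:ℝ) c,
        HasDerivAt (fun y : ℝ =>
          (g - f * y) ^ (n+1) / (((f + g) * (ε' + g) ^ n) * (1 + y) ^ (n+1))
            - 1 / (1 + y) ^ (n+1))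
        ((1 - ((g - f * x) / (ε' + g)) ^ n) * (((n:ℝ) + 1) / (1 + x) ^ (n + 2))) x := by
      intro x hx
      rw [Set.uIcc_of_le hc.le] at hx
      have : (0:ℝ) ≤ x := hx.1
      exact hasDerivAt_F n f g ε' hfg hεg.ne' x (by linarith)
    have hintble : IntervalIntegrable
        (fun x : ℝ => (1 - ((g - f*x)/(ε'+g))^n) * (((n:ℝ)+1)/(1+x)^(n+2)))
        volume 0 c := by
      apply ContinuousOn.intervalIntegrable
      rw [Set.uIcc_of_le hc.le]
      apply ContinuousOn.mul
      · apply continuousOn_const.sub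
        apply ContinuousOn.pow
        apply ContinuousOn.div_const
        exact (continuous_const.sub (continuous_const.mul continuous_id)).continuousOn
      · apply continuousOn_const.div
        · exact ((continuous_const.add continuous_id).pow _).continuousOn
        · intro x hx
          have : (0:ℝ) ≤ x := hx.1
          positivity
    rw [intervalIntegral.integral_eq_sub_of_hasDerivAt hderiv hintble]
    have hgc : g - f * c = 0 := by
      rw [hcdef]
      field_simp
      ring
    rw [hgc]
    simp only [mul_zero, sub_zero, add_zero]
    rw [zero_pow (by omega : n + 1 ≠ 0)]
    simp only [zero_div, one_pow, mul_one, zero_sub]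
    ring
  have hIoi : ∫ x in Set.Ioi c, φ x = 1/(1+c)^(n+1) := by
    rw [setIntegral_congr_fun measurableSet_Ioi tail_fun_eq]
    exact htail_val
  have hunion : Set.Ioc (0:ℝ) c ∪ Set.Ioi c = Set.Ioi 0 := Set.Ioc_union_Ioi_eq_Ioi hc.le
  have main : ∫ x in Set.Ioi (0:ℝ), φ x = 1 - g^(n+1)/((f + g) * (ε' + g) ^ n) := by
    rw [← hunion, setIntegral_union (Set.Ioc_disjoint_Ioi le_rfl) measurableSet_Ioi hint1 hint2,
      hIoc, hIoi]
    ring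
  have hfinal : g^(n+1)/((f + g) * (ε' + g) ^ n)
      = 1 / ((1 + f / g) * (1 + ε' / g) ^ n) := by
    rw [div_eq_div_iff hA0 (by positivity)]
    have h1 : 1 + f / g = (g + f) / g := by field_simp
    have h2 : 1 + ε' / g = (g + ε') / g := by field_simp
    rw [h1, h2, div_pow, div_mul_div_comm]
    field_simp
    ring
  rw [main, hfinal]
end

section
/- Let c > 0, r > 0 and d > 0. Then ∫_0^{2π} (1 − c r²/((1+c) r² + d² − 2 r d cos θ)) dθ = 2π (1 − 1/(√(1 + (r+d)²/(c r²)) · √(1 + (r−d)²/(c r²)))). -/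
open MeasureTheory Real

-- Key integral: ∫₀^{2π} dθ/(A - B cos θ) with 0 < B < A
theorem key_integral (A B : ℝ) (hB : 0 < B) (hBA : B < A) :
    ∫ θ in (0:ℝ)..(2 * π), 1 / (A - B * Real.cos θ)
      = 2 * π / Real.sqrt (A ^ 2 - B ^ 2) := by
  set s := Real.sqrt (A ^ 2 - B ^ 2) with hs_def
  have hA : 0 < A := hB.trans hBA
  have hAB2 : 0 < A ^ 2 - B ^ 2 := by nlinarith
  have hs2 : s ^ 2 = A ^ 2 - B ^ 2 := Real.sq_sqrt hAB2.le
  have hs : 0 < s := Real.sqrt_pos.2 hAB2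
  have hden : ∀ θ : ℝ, 0 < A - B * Real.cos θ := by
    intro θ
    nlinarith [Real.cos_le_one θ, Real.neg_one_le_cos θ]
  have hD : ∀ θ : ℝ, 0 < A - B * Real.cos θ + s := fun θ => by linarith [hden θ]
  set F : ℝ → ℝ := fun θ =>
    (θ + 2 * Real.arctan (B * Real.sin θ / (A - B * Real.cos θ + s))) / s with hF_def
  have hderiv : ∀ θ : ℝ, HasDerivAt F (1 / (A - B * Real.cos θ)) θ := by
    intro θ
    have hDne : A - B * Real.cos θ + s ≠ 0 := (hD θ).ne'
    have hden_deriv : HasDerivAt (fun t => A - B * Real.cos t + s) (B * Real.sin θ) θ := by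
      have h1 := ((Real.hasDerivAt_cos θ).const_mul B).const_sub A
      have h2 := h1.add_const s
      exact h2.congr_deriv (by ring)
    have hnum_deriv : HasDerivAt (fun t => B * Real.sin t) (B * Real.cos θ) θ :=
      (Real.hasDerivAt_sin θ).const_mul B
    have hu : HasDerivAt (fun t => B * Real.sin t / (A - B * Real.cos t + s))
        ((B * Real.cos θ * (A - B * Real.cos θ + s) - B * Real.sin θ * (B * Real.sin θ)) /
          (A - B * Real.cos θ + s) ^ 2) θ := hnum_deriv.div hden_deriv hDne
    have hat : HasDerivAt (fun t => Real.arctan (B * Real.sin t / (A - B * Real.cos t + s)))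
        ((1 / (1 + (B * Real.sin θ / (A - B * Real.cos θ + s)) ^ 2)) *
          ((B * Real.cos θ * (A - B * Real.cos θ + s) - B * Real.sin θ * (B * Real.sin θ)) /
            (A - B * Real.cos θ + s) ^ 2)) θ :=
      (Real.hasDerivAt_arctan _).comp θ hu
    have hfull : HasDerivAt F
        ((1 + 2 * ((1 / (1 + (B * Real.sin θ / (A - B * Real.cos θ + s)) ^ 2)) *
          ((B * Real.cos θ * (A - B * Real.cos θ + s) - B * Real.sin θ * (B * Real.sin θ)) /
            (A - B * Real.cos θ + s) ^ 2))) / s) θ :=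
      ((hasDerivAt_id θ).add (hat.const_mul 2)).div_const s
    convert hfull using 1
    set x := Real.cos θ with hx
    set y := Real.sin θ with hy
    have hsin' : y ^ 2 = 1 - x ^ 2 := by
      have := Real.sin_sq_add_cos_sq θ
      rw [← hx, ← hy] at this; linarith
    have hAx : 0 < A - B * x := hden θ
    have hDp : 0 < A - B * x + s := hD θ
    have hAs : 0 < A + s := by linarith
    have hN : (A - B * x + s) ^ 2 + (B * y) ^ 2 = (A - B * x) * (2 * (A + s)) := by
      linear_combination hs2 + B ^ 2 * hsin'
    have hM : (A - B * x + s) ^ 2 + (B * y) ^ 2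
        + 2 * (B * x * (A - B * x + s) - B * y * (B * y)) = 2 * s * (A + s) := by
      linear_combination (-1) * hs2 - B ^ 2 * hsin'
    have h1u : 0 < 1 + (B * y / (A - B * x + s)) ^ 2 := by positivity
    have hu2 : (1 : ℝ) / (1 + (B * y / (A - B * x + s)) ^ 2)
        * ((B * x * (A - B * x + s) - B * y * (B * y)) / (A - B * x + s) ^ 2)
        = (B * x * (A - B * x + s) - B * y * (B * y))
          / ((A - B * x + s) ^ 2 + (B * y) ^ 2) := by
      have hpos : ((A - B * x + s) ^ 2 + (B * y) ^ 2) ≠ 0 := by positivity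
      field_simp
    have hbig : 1 + 2 * ((1 : ℝ) / (1 + (B * y / (A - B * x + s)) ^ 2)
        * ((B * x * (A - B * x + s) - B * y * (B * y)) / (A - B * x + s) ^ 2))
        = s / (A - B * x) := by
      rw [hu2, hN]
      field_simp
      linear_combination (-1) * hs2 - B ^ 2 * hsin'
    rw [hbig]
    rw [div_div, mul_comm (A - B * x) s, ← div_div, div_self hs.ne']
  have hcont : Continuous fun θ : ℝ => 1 / (A - B * Real.cos θ) :=
    continuous_const.div (by continuity) (fun θ => (hden θ).ne')
  have := intervalIntegral.integral_eq_sub_of_hasDerivAt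
    (fun θ _ => hderiv θ) (hcont.intervalIntegrable 0 (2 * π))
  rw [this]
  simp [hF_def, Real.sin_two_pi, Real.cos_two_pi]


/-- Appendix F (eqs. (59)–(60)): the angular integral identity for the TAB scheme with
path-loss exponent `α = 2`. -/
theorem angular_integral_identity (c r d : ℝ) (hc : 0 < c) (hr : 0 < r) (hd : 0 < d) :
    ∫ θ in (0:ℝ)..(2 * π),
        (1 - c * r ^ 2 / ((1 + c) * r ^ 2 + d ^ 2 - 2 * r * d * Real.cos θ))
      = 2 * π * (1 - 1 / (Real.sqrt (1 + (r + d) ^ 2 / (c * r ^ 2)) *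
          Real.sqrt (1 + (r - d) ^ 2 / (c * r ^ 2)))) := by
  set A := (1 + c) * r ^ 2 + d ^ 2 with hA_def
  set B := 2 * r * d with hB_def
  have hB : 0 < B := by positivity
  have hcr : 0 < c * r ^ 2 := by positivity
  have hBA : B < A := by nlinarith [sq_nonneg (r - d)]
  have hAB2 : 0 < A ^ 2 - B ^ 2 := by nlinarith
  have hden : ∀ θ : ℝ, 0 < A - B * Real.cos θ := by
    intro θ
    nlinarith [Real.cos_le_one θ, Real.neg_one_le_cos θ]
  have hrw : ∀ θ : ℝ, 1 - c * r ^ 2 / ((1 + c) * r ^ 2 + d ^ 2 - 2 * r * d * Real.cos θ)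
      = 1 - c * r ^ 2 * (1 / (A - B * Real.cos θ)) := by
    intro θ
    rw [← hA_def]
    rw [show 2 * r * d * Real.cos θ = B * Real.cos θ from by rw [hB_def]]
    ring
  have hcont : Continuous fun θ : ℝ => 1 / (A - B * Real.cos θ) :=
    continuous_const.div (by continuity) (fun θ => (hden θ).ne')
  calc ∫ θ in (0:ℝ)..(2 * π),
        (1 - c * r ^ 2 / ((1 + c) * r ^ 2 + d ^ 2 - 2 * r * d * Real.cos θ))
      = ∫ θ in (0:ℝ)..(2 * π), (1 - c * r ^ 2 * (1 / (A - B * Real.cos θ))) := by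
        simp_rw [hrw]
    _ = (∫ θ in (0:ℝ)..(2 * π), (1:ℝ))
        - ∫ θ in (0:ℝ)..(2 * π), c * r ^ 2 * (1 / (A - B * Real.cos θ)) := by
        apply intervalIntegral.integral_sub intervalIntegrable_const
        exact (continuous_const.mul hcont).intervalIntegrable 0 (2 * π)
    _ = 2 * π - c * r ^ 2 * (2 * π / Real.sqrt (A ^ 2 - B ^ 2)) := by
        rw [intervalIntegral.integral_const_mul, key_integral A B hB hBA]
        simp
    _ = 2 * π * (1 - 1 / (Real.sqrt (1 + (r + d) ^ 2 / (c * r ^ 2)) *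
          Real.sqrt (1 + (r - d) ^ 2 / (c * r ^ 2)))) := by
        have hXY : Real.sqrt (1 + (r + d) ^ 2 / (c * r ^ 2)) *
            Real.sqrt (1 + (r - d) ^ 2 / (c * r ^ 2))
            = Real.sqrt (A ^ 2 - B ^ 2) / (c * r ^ 2) := by
          rw [← Real.sqrt_mul (by positivity),
            show (1 + (r + d) ^ 2 / (c * r ^ 2)) * (1 + (r - d) ^ 2 / (c * r ^ 2))
              = (A ^ 2 - B ^ 2) / (c * r ^ 2) ^ 2 from by
                rw [hA_def, hB_def]; field_simp; ring,
            Real.sqrt_div hAB2.le, Real.sqrt_sq hcr.le]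
        rw [hXY, one_div_div]
        have hs : Real.sqrt (A ^ 2 - B ^ 2) ≠ 0 := (Real.sqrt_pos.2 hAB2).ne'
        field_simp
end

section
/- Fix h > 0, g > 0, ρ > 0, β ≥ 1, d_A > 0, d_B > 0 and α > 0, and for P_J > 0 define Ω₀(P_J) = exp(d_B^α/P_J) / (1 + (d_A/d_B)^α · h / (β (1/P_J + ρ g))). Then Ω₀ is strictly decreasing on (0, ∞). -/
open Real

/-- Remark 3 monotonicity claim: for the TAB scheme without artificial noise
(`ε = 0`), the per-eavesdropper kernel
`Ω₀(P_J) = e^{d_B^α/P_J}/(1 + (d_A/d_B)^α h/(β(1/P_J + ρ g)))` is strictly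
decreasing in the jamming power `P_J` on `(0, ∞)`. -/
theorem tab_kernel_strictAnti (h g ρ β d_A d_B α : ℝ)
    (hh : 0 < h) (hg : 0 < g) (hρ : 0 < ρ) (hβ : 1 ≤ β)
    (hdA : 0 < d_A) (hdB : 0 < d_B) (hα : 0 < α) :
    StrictAntiOn (fun P_J : ℝ =>
        Real.exp (d_B ^ α / P_J) /
          (1 + (d_A / d_B) ^ α * h / (β * (1 / P_J + ρ * g)))) (Set.Ioi 0) := by
  intro x hx y hy hxy
  simp only [Set.mem_Ioi] at hx hy
  have hβ0 : (0:ℝ) < β := lt_of_lt_of_le one_pos hβ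
  have hk : (0:ℝ) < (d_A / d_B) ^ α * h :=
    mul_pos (Real.rpow_pos_of_pos (div_pos hdA hdB) _) hh
  have hc : (0:ℝ) < d_B ^ α := Real.rpow_pos_of_pos hdB _
  have hρg : (0:ℝ) < ρ * g := mul_pos hρ hg
  have hdenx : (0:ℝ) < β * (1 / x + ρ * g) :=
    mul_pos hβ0 (add_pos (one_div_pos.mpr hx) hρg)
  have hdeny : (0:ℝ) < β * (1 / y + ρ * g) :=
    mul_pos hβ0 (add_pos (one_div_pos.mpr hy) hρg)
  have hdlt : β * (1 / y + ρ * g) < β * (1 / x + ρ * g) := by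
    apply mul_lt_mul_of_pos_left _ hβ0
    have : 1 / y < 1 / x := one_div_lt_one_div_of_lt hx hxy
    linarith
  have hDx : (0:ℝ) < 1 + (d_A / d_B) ^ α * h / (β * (1 / x + ρ * g)) := by
    positivity
  have hDy : (0:ℝ) < 1 + (d_A / d_B) ^ α * h / (β * (1 / y + ρ * g)) := by
    positivity
  have hDlt : 1 + (d_A / d_B) ^ α * h / (β * (1 / x + ρ * g)) <
      1 + (d_A / d_B) ^ α * h / (β * (1 / y + ρ * g)) := by
    have := div_lt_div_of_pos_left hk hdeny hdlt
    linarith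
  have hNlt : Real.exp (d_B ^ α / y) < Real.exp (d_B ^ α / x) :=
    Real.exp_lt_exp.mpr (div_lt_div_of_pos_left hc hx hxy)
  have hN : (0:ℝ) < Real.exp (d_B ^ α / y) := Real.exp_pos _
  calc Real.exp (d_B ^ α / y) / (1 + (d_A / d_B) ^ α * h / (β * (1 / y + ρ * g)))
      < Real.exp (d_B ^ α / y) / (1 + (d_A / d_B) ^ α * h / (β * (1 / x + ρ * g))) :=
        div_lt_div_of_pos_left hN hDx hDlt
    _ < Real.exp (d_B ^ α / x) / (1 + (d_A / d_B) ^ α * h / (β * (1 / x + ρ * g))) :=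
        by exact div_lt_div_of_pos_right hNlt hDx
end
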